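/- Transitivity of algorithmic subtyping: in any environment Γ, if Γ ⊢→ T1 <: T2 and Γ ⊢→ T2 <: T3, then Γ ⊢→ T1 <: T3. -/

import Mathlib

set_option maxHeartbeats 1000000

/-! # Syntax of capture calculus CC<: -/

-- Shape types and types of CC<: (a shape type `S` used as a type is `{} S`).
mutual
inductive ShapeTy : Type where
  | tvar : ℕ → ShapeTy                       -- X
  | top : ShapeTy                            -- ⊤
  | arrow : ℕ → Ty → Ty → ShapeTy            -- ∀(x:U)T
  | tarrow : ℕ → ShapeTy → Ty → ShapeTy      -- ∀[X<:S]T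
  | box : Ty → ShapeTy                       -- □T
deriving DecidableEq
inductive Ty : Type where
  | capt : Finset ℕ → ShapeTy → Ty           -- C S
deriving DecidableEq
end

/-- Environment bindings: `x : T` and `X <: S`. -/
inductive Binding : Type where
  | val : ℕ → Ty → Binding
  | tvar : ℕ → ShapeTy → Binding
deriving DecidableEq

/-- Environments, newest binding first (`Γ, b` is `b :: Γ`). -/
abbrev Env := List Binding

def envDom : Env → Finset ℕ
  | [] => ∅
  | Binding.val x _ :: Γ => insert x (envDom Γ)
  | Binding.tvar _ _ :: Γ => envDom Γ

def envTDom : Env → Finset ℕ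
  | [] => ∅
  | Binding.val _ _ :: Γ => envTDom Γ
  | Binding.tvar X _ :: Γ => insert X (envTDom Γ)

/-- Terms of CC<: in monadic normal form. -/
inductive Tm : Type where
  | var : ℕ → Tm
  | abs : ℕ → Ty → Tm → Tm                   -- λ(x:T)t
  | tabs : ℕ → ShapeTy → Tm → Tm             -- λ[X<:S]t
  | app : ℕ → ℕ → Tm                         -- x y
  | tapp : ℕ → ShapeTy → Tm                  -- x[S]
  | letin : ℕ → Tm → Tm → Tm                 -- let x = s in t
  | box : ℕ → Tm                             -- □x
  | unbox : Finset ℕ → ℕ → Tm                -- C ⟜ x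
deriving DecidableEq

def Tm.isValue : Tm → Bool
  | .abs _ _ _ => true
  | .tabs _ _ _ => true
  | .box _ => true
  | _ => false

def Tm.isVar : Tm → Bool
  | .var _ => true
  | _ => false

/-- Captured variables of a term. -/
def cv : Tm → Finset ℕ
  | .var x => {x}
  | .abs x _ t => cv t \ {x}
  | .tabs _ _ t => cv t
  | .app x y => {x, y}
  | .tapp x _ => {x}
  | .letin x s t => if s.isValue = true ∧ x ∉ cv t then cv t else cv s ∪ (cv t \ {x})
  | .box _ => ∅
  | .unbox C x => insert x C

/-- Capture set of a type. -/
def cvTy : Ty → Finset ℕ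
  | .capt C _ => C

/-! ## Substitution, renaming, free variables, avoidance -/

/-- Renaming `[z := y]` on capture sets. -/
def renameSet (z y : ℕ) (C : Finset ℕ) : Finset ℕ :=
  if z ∈ C then insert y (C \ {z}) else C

mutual
/-- Renaming `[z := y]` on shape types. -/
def renameShape (z y : ℕ) : ShapeTy → ShapeTy
  | .tvar X => .tvar X
  | .top => .top
  | .arrow x U T => .arrow x (renameTy z y U) (renameTy z y T)
  | .tarrow X S T => .tarrow X (renameShape z y S) (renameTy z y T)
  | .box T => .box (renameTy z y T)
/-- Renaming `[z := y]` on types. -/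
def renameTy (z y : ℕ) : Ty → Ty
  | .capt C S => .capt (renameSet z y C) (renameShape z y S)
end

def renameBinding (z y : ℕ) : Binding → Binding
  | .val x T => .val x (renameTy z y T)
  | .tvar X S => .tvar X (renameShape z y S)

def renameEnv (z y : ℕ) : Env → Env := List.map (renameBinding z y)

mutual
/-- Type substitution `[X := R]` on shape types. -/
def tsubstShape (X : ℕ) (R : ShapeTy) : ShapeTy → ShapeTy
  | .tvar Y => if Y = X then R else .tvar Y
  | .top => .top
  | .arrow x U T => .arrow x (tsubstTy X R U) (tsubstTy X R T)
  | .tarrow Y S T => .tarrow Y (tsubstShape X R S) (tsubstTy X R T)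
  | .box T => .box (tsubstTy X R T)
/-- Type substitution `[X := R]` on types. -/
def tsubstTy (X : ℕ) (R : ShapeTy) : Ty → Ty
  | .capt C S => .capt C (tsubstShape X R S)
end

def tsubstBinding (X : ℕ) (R : ShapeTy) : Binding → Binding
  | .val x T => .val x (tsubstTy X R T)
  | .tvar Y S => .tvar Y (tsubstShape X R S)

def tsubstEnv (X : ℕ) (R : ShapeTy) : Env → Env := List.map (tsubstBinding X R)

mutual
/-- Free (term) variables of a shape type. -/
def fvShape : ShapeTy → Finset ℕ
  | .tvar _ => ∅
  | .top => ∅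
  | .arrow x U T => fvTy U ∪ (fvTy T \ {x})
  | .tarrow _ S T => fvShape S ∪ fvTy T
  | .box T => fvTy T
/-- Free (term) variables of a type. -/
def fvTy : Ty → Finset ℕ
  | .capt C S => C ∪ fvShape S
end

mutual
/-- Avoidance: replace `x` by `C` at covariant capture-set occurrences (`pos = true`)
and delete `x` at contravariant occurrences. -/
def avoidShape (x : ℕ) (C : Finset ℕ) (pos : Bool) : ShapeTy → ShapeTy
  | .tvar X => .tvar X
  | .top => .top
  | .arrow y U T => .arrow y (avoidTy x C (!pos) U) (avoidTy x C pos T)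
  | .tarrow X S T => .tarrow X (avoidShape x C (!pos) S) (avoidTy x C pos T)
  | .box T => .box (avoidTy x C pos T)
def avoidTy (x : ℕ) (C : Finset ℕ) (pos : Bool) : Ty → Ty
  | .capt D S =>
      .capt (if x ∈ D then (if pos then (D \ {x}) ∪ C else D \ {x}) else D)
        (avoidShape x C pos S)
end

/-- `avoid x C T = avoid_x^C(T)`. -/
def avoid (x : ℕ) (C : Finset ℕ) (T : Ty) : Ty := avoidTy x C true T

/-! ## Well-formedness -/

mutual
def WfShape : Env → ShapeTy → Prop
  | Γ, .tvar X => X ∈ envTDom Γ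
  | _, .top => True
  | Γ, .arrow x U T => WfTy Γ U ∧ WfTy (Binding.val x U :: Γ) T
  | Γ, .tarrow X S T => WfShape Γ S ∧ WfTy (Binding.tvar X S :: Γ) T
  | Γ, .box T => WfTy Γ T
def WfTy : Env → Ty → Prop
  | Γ, .capt C S => C ⊆ envDom Γ ∧ WfShape Γ S
end

/-- Well-formed environments. -/
inductive EnvWf : Env → Prop where
  | nil : EnvWf []
  | val {Γ : Env} {x : ℕ} {T : Ty} : EnvWf Γ → WfTy Γ T → x ∉ envDom Γ →
      EnvWf (Binding.val x T :: Γ)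
  | tvar {Γ : Env} {X : ℕ} {S : ShapeTy} : EnvWf Γ → WfShape Γ S → X ∉ envTDom Γ →
      EnvWf (Binding.tvar X S :: Γ)

/-! ## Subcapturing -/

inductive Subcapt : Env → Finset ℕ → Finset ℕ → Prop where
  | elem {Γ : Env} {x : ℕ} {C : Finset ℕ} : x ∈ C → Subcapt Γ {x} C
  | set {Γ : Env} {C1 C2 : Finset ℕ} : (∀ x ∈ C1, Subcapt Γ {x} C2) → Subcapt Γ C1 C2
  | var {Γ : Env} {x : ℕ} {C C2 : Finset ℕ} {S : ShapeTy} :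
      Binding.val x (Ty.capt C S) ∈ Γ → Subcapt Γ C C2 → Subcapt Γ {x} C2

/-! ## Algorithmic subtyping (CC_algo) -/

mutual
inductive SubShape : Env → ShapeTy → ShapeTy → Prop where
  | refl {Γ X} : SubShape Γ (.tvar X) (.tvar X)
  | tvar {Γ X S S'} : Binding.tvar X S ∈ Γ → SubShape Γ S S' → SubShape Γ (.tvar X) S'
  | top {Γ S} : SubShape Γ S .top
  | arrow {Γ x U1 U2 T1 T2} : SubTy Γ U2 U1 → SubTy (Binding.val x U2 :: Γ) T1 T2 →
      SubShape Γ (.arrow x U1 T1) (.arrow x U2 T2)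
  | tarrow {Γ X S1 S2 T1 T2} : SubShape Γ S2 S1 → SubTy (Binding.tvar X S2 :: Γ) T1 T2 →
      SubShape Γ (.tarrow X S1 T1) (.tarrow X S2 T2)
  | boxed {Γ T1 T2} : SubTy Γ T1 T2 → SubShape Γ (.box T1) (.box T2)
inductive SubTy : Env → Ty → Ty → Prop where
  | capt {Γ C1 C2 S1 S2} : Subcapt Γ C1 C2 → SubShape Γ S1 S2 →
      SubTy Γ (.capt C1 S1) (.capt C2 S2)
end

/-! ## Declarative subtyping (CC<:) -/

mutual
inductive DSubShape : Env → ShapeTy → ShapeTy → Prop where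
  | refl {Γ S} : DSubShape Γ S S
  | trans {Γ S1 S2 S3} : DSubShape Γ S1 S2 → DSubShape Γ S2 S3 → DSubShape Γ S1 S3
  | tvar {Γ X S} : Binding.tvar X S ∈ Γ → DSubShape Γ (.tvar X) S
  | top {Γ S} : DSubShape Γ S .top
  | arrow {Γ x U1 U2 T1 T2} : DSubTy Γ U2 U1 → DSubTy (Binding.val x U2 :: Γ) T1 T2 →
      DSubShape Γ (.arrow x U1 T1) (.arrow x U2 T2)
  | tarrow {Γ X S1 S2 T1 T2} : DSubShape Γ S2 S1 → DSubTy (Binding.tvar X S2 :: Γ) T1 T2 →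
      DSubShape Γ (.tarrow X S1 T1) (.tarrow X S2 T2)
  | boxed {Γ T1 T2} : DSubTy Γ T1 T2 → DSubShape Γ (.box T1) (.box T2)
inductive DSubTy : Env → Ty → Ty → Prop where
  | refl {Γ T} : DSubTy Γ T T
  | trans {Γ T1 T2 T3} : DSubTy Γ T1 T2 → DSubTy Γ T2 T3 → DSubTy Γ T1 T3
  | capt {Γ C1 C2 S1 S2} : Subcapt Γ C1 C2 → DSubShape Γ S1 S2 →
      DSubTy Γ (.capt C1 S1) (.capt C2 S2)
end

/-! ## Type-variable widening and widened variable typing -/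

def ShapeTy.IsTVar : ShapeTy → Prop := fun S => ∃ X, S = ShapeTy.tvar X

inductive WidenTVar : Env → ℕ → ShapeTy → Prop where
  | shape {Γ X S} : Binding.tvar X S ∈ Γ → ¬ S.IsTVar → WidenTVar Γ X S
  | step {Γ X Y S} : Binding.tvar X (.tvar Y) ∈ Γ → WidenTVar Γ Y S → WidenTVar Γ X S

/-- `Γ ⊢→ x : T` for a variable (the alg-var rule). -/
def VarTypedAs (Γ : Env) (x : ℕ) (T : Ty) : Prop :=
  ∃ C S, Binding.val x (Ty.capt C S) ∈ Γ ∧ T = Ty.capt {x} S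

/-- Widened variable typing `Γ ⊢ x ⇑ C S`. -/
inductive WidenVar : Env → ℕ → Ty → Prop where
  | widen {Γ x C X S} : VarTypedAs Γ x (Ty.capt C (.tvar X)) → WidenTVar Γ X S →
      WidenVar Γ x (Ty.capt C S)
  | lookup {Γ x C S} : VarTypedAs Γ x (Ty.capt C S) → ¬ S.IsTVar →
      WidenVar Γ x (Ty.capt C S)

/-! ## Algorithmic typing (CC_algo) -/

inductive AlgTyp : Env → Tm → Ty → Prop where
  | var {Γ x C S} : Binding.val x (Ty.capt C S) ∈ Γ → AlgTyp Γ (.var x) (.capt {x} S)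
  | abs {Γ x U t T} : AlgTyp (Binding.val x U :: Γ) t T → WfTy Γ U →
      AlgTyp Γ (.abs x U t) (.capt (cv t \ {x}) (.arrow x U T))
  | tabs {Γ X S t T} : AlgTyp (Binding.tvar X S :: Γ) t T → WfShape Γ S →
      AlgTyp Γ (.tabs X S t) (.capt (cv t) (.tarrow X S T))
  | app {Γ x y z C T U T'} : WidenVar Γ x (.capt C (.arrow z T U)) →
      AlgTyp Γ (.var y) T' → SubTy Γ T' T →
      AlgTyp Γ (.app x y) (renameTy z y U)
  | tapp {Γ x X S S' T C} : WidenVar Γ x (.capt C (.tarrow X S T)) → SubShape Γ S' S →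
      AlgTyp Γ (.tapp x S') (tsubstTy X S' T)
  | box {Γ x C S} : AlgTyp Γ (.var x) (.capt C S) → C ⊆ envDom Γ →
      AlgTyp Γ (.box x) (.capt ∅ (.box (.capt C S)))
  | unbox {Γ x Cx C C' S} : WidenVar Γ x (.capt Cx (.box (.capt C S))) →
      C' ⊆ envDom Γ → Subcapt Γ C C' →
      AlgTyp Γ (.unbox C' x) (.capt C S)
  | letin {Γ x s t T U} : AlgTyp Γ s T → AlgTyp (Binding.val x T :: Γ) t U →
      AlgTyp Γ (.letin x s t) (avoid x (cvTy T) U)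

/-! ## Declarative typing (CC<:) -/

inductive DTyp : Env → Tm → Ty → Prop where
  | var {Γ x C S} : Binding.val x (Ty.capt C S) ∈ Γ → DTyp Γ (.var x) (.capt {x} S)
  | sub {Γ t T U} : DTyp Γ t T → DSubTy Γ T U → DTyp Γ t U
  | abs {Γ x U t T} : DTyp (Binding.val x U :: Γ) t T → WfTy Γ U →
      DTyp Γ (.abs x U t) (.capt (cv t \ {x}) (.arrow x U T))
  | tabs {Γ X S t T} : DTyp (Binding.tvar X S :: Γ) t T → WfShape Γ S →
      DTyp Γ (.tabs X S t) (.capt (cv t) (.tarrow X S T))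
  | app {Γ x y z C T U} : DTyp Γ (.var x) (.capt C (.arrow z T U)) → DTyp Γ (.var y) T →
      DTyp Γ (.app x y) (renameTy z y U)
  | tapp {Γ x X S T C} : DTyp Γ (.var x) (.capt C (.tarrow X S T)) →
      DTyp Γ (.tapp x S) (tsubstTy X S T)
  | box {Γ x C S} : DTyp Γ (.var x) (.capt C S) → C ⊆ envDom Γ →
      DTyp Γ (.box x) (.capt ∅ (.box (.capt C S)))
  | unbox {Γ x C D S} : DTyp Γ (.var x) (.capt D (.box (.capt C S))) → C ⊆ envDom Γ →
      DTyp Γ (.unbox C x) (.capt C S)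
  | letin {Γ x s t T U} : DTyp Γ s T → DTyp (Binding.val x T :: Γ) t U → x ∉ fvTy U →
      DTyp Γ (.letin x s t) U

/-! ## Term normalisation -/

def renameTm (z y : ℕ) : Tm → Tm
  | .var x => .var (if x = z then y else x)
  | .abs x T t => .abs x (renameTy z y T) (renameTm z y t)
  | .tabs X S t => .tabs X (renameShape z y S) (renameTm z y t)
  | .app x w => .app (if x = z then y else x) (if w = z then y else w)
  | .tapp x S => .tapp (if x = z then y else x) (renameShape z y S)
  | .letin x s t => .letin x (renameTm z y s) (renameTm z y t)
  | .box x => .box (if x = z then y else x)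
  | .unbox C x => .unbox (renameSet z y C) (if x = z then y else x)

/-- `⦅let …⦆`-style simplification of a let binding (nl-box, nl-deref, nl-rename). -/
def normLet : Tm → Tm
  | .letin y (.unbox C x) (.box z) =>
      if z = y then .var x else .letin y (.unbox C x) (.box z)
  | .letin y (.var x) u => renameTm y x u
  | .letin y s (.var z) => if z = y then s else .letin y s (.var z)
  | t => t

/-- Beta-simplification of eta-expansions (nl-beta, nl-tbeta). -/
def normLam : Tm → Tm
  | .abs z T (.app x w) => if w = z then .var x else .abs z T (.app x w)
  | .tabs X S (.tapp x (.tvar Y)) => if Y = X then .var x else .tabs X S (.tapp x (.tvar Y))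
  | t => t

/-- Term normalisation `⦅t⦆`. -/
def norm : Tm → Tm
  | .letin x s t => normLet (.letin x (norm s) (norm t))
  | .abs x T u => normLam (.abs x T (norm u))
  | .tabs X S u => normLam (.tabs X S (norm u))
  | t => t

/-! ## Adaptation subtyping (CC_adp, Figure 5) -/

/-- `[z := D]` applied to a capture set. -/
def substSet (z : ℕ) (D C : Finset ℕ) : Finset ℕ :=
  if z ∈ C then (C \ {z}) ∪ D else C

/-- Adaptation subtyping `Γ ⊢ x : T ↝ t <: U`. -/
inductive AdpSub : Env → ℕ → Ty → Tm → Ty → Prop where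
  | refl {Γ x C C' S} : Subcapt Γ C C' → AdpSub Γ x (.capt C S) (.var x) (.capt C' S)
  | tvar {Γ x X S C C' S' t} : Binding.tvar X S ∈ Γ →
      AdpSub Γ x (.capt C S) t (.capt C' S') →
      AdpSub Γ x (.capt C (.tvar X)) t (.capt C' S')
  | top {Γ x C C' S} : Subcapt Γ C C' → AdpSub Γ x (.capt C S) (.var x) (.capt C' .top)
  | boxed {Γ : Env} {x y z : ℕ} {C1 C2 Cx Cx' : Finset ℕ} {S1 S2 : ShapeTy} {ty : Tm} :
      AdpSub Γ y (.capt C1 S1) ty (.capt C2 S2) →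
      AdpSub Γ x (.capt Cx (.box (.capt C1 S1)))
        (norm (.letin y (.unbox C1 x) (.letin z ty (.box z))))
        (.capt Cx' (.box (.capt C2 S2)))
  | arrow {Γ : Env} {xf x x' z : ℕ} {U1 U2 T1 T2 T1' : Ty} {C C' : Finset ℕ} {tx tz : Tm} :
      AdpSub Γ x U2 tx U1 →
      AdpSub (Binding.val x' U1 :: Binding.val x U2 :: Γ) z T1' tz T2 →
      T1' = (if tx = Tm.var x then T1 else renameTy x x' T1) →
      Subcapt Γ (substSet xf C (cv (norm (Tm.abs x U2 (.letin x' tx (.letin z (.app xf x') tz)))))) C' →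
      AdpSub Γ xf (.capt C (.arrow x U1 T1))
        (norm (Tm.abs x U2 (.letin x' tx (.letin z (.app xf x') tz))))
        (.capt C' (.arrow x U2 T2))
  | tarrow {Γ : Env} {xf X z : ℕ} {S1 S2 : ShapeTy} {T1 T2 : Ty} {C C' : Finset ℕ} {tz : Tm} :
      SubShape Γ S2 S1 →
      AdpSub (Binding.tvar X S2 :: Γ) z T1 tz T2 →
      Subcapt Γ (substSet xf C (cv (norm (Tm.tabs X S2 (.letin z (.tapp xf (.tvar X)) tz))))) C' →
      AdpSub Γ xf (.capt C (.tarrow X S1 T1))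
        (norm (Tm.tabs X S2 (.letin z (.tapp xf (.tvar X)) tz)))
        (.capt C' (.tarrow X S2 T2))
  | box {Γ : Env} {x y : ℕ} {C C' C'' : Finset ℕ} {S S' : ShapeTy} {tx : Tm} :
      AdpSub Γ x (.capt C S) tx (.capt C' S') → C' ⊆ envDom Γ →
      AdpSub Γ x (.capt C S) (.letin y tx (.box y)) (.capt C'' (.box (.capt C' S')))
  | unbox {Γ : Env} {x y : ℕ} {C C' : Finset ℕ} {S S' : ShapeTy} {ty : Tm} :
      AdpSub Γ y (.capt C S) ty (.capt C' S') → C ⊆ envDom Γ →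
      AdpSub Γ x (.capt ∅ (.box (.capt C S))) (.letin y (.unbox C x) ty) (.capt C' S')

/-- Box adaptation `Γ ⊢ x ↝ t : T`. -/
inductive AdpTyp : Env → ℕ → Tm → Ty → Prop where
  | adapt {Γ x T0 t T} : AlgTyp Γ (.var x) T0 → AdpSub Γ x T0 t T → WfTy Γ T →
      AdpTyp Γ x t T

/-- Variable typing with unboxing `Γ ⊢ x ⇑↝ t : T`. -/
inductive VarUnbox : Env → ℕ → Tm → Ty → Prop where
  | ret {Γ x T} : WidenVar Γ x T → VarUnbox Γ x (.var x) T
  | unbox {Γ x D C S} : WidenVar Γ x (.capt D (.box (.capt C S))) → C ⊆ envDom Γ →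
      VarUnbox Γ x (.unbox C x) (.capt C S)

/-! ## Box-inference typing (CC_adp, Figure 4): `Γ ⊢→ t ↝ t' : T` -/

inductive BITyp : Env → Tm → Tm → Ty → Prop where
  | var {Γ x C S} : Binding.val x (Ty.capt C S) ∈ Γ →
      BITyp Γ (.var x) (.var x) (.capt C S)
  | abs {Γ x U t t' T} : BITyp (Binding.val x U :: Γ) t t' T → WfTy Γ U →
      BITyp Γ (.abs x U t) (.abs x U t') (.capt (cv t' \ {x}) (.arrow x U T))
  | tabs {Γ X S t t' T} : BITyp (Binding.tvar X S :: Γ) t t' T → WfShape Γ S →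
      BITyp Γ (.tabs X S t) (.tabs X S t') (.capt (cv t') (.tarrow X S T))
  | app {Γ : Env} {x y x' y' z : ℕ} {C : Finset ℕ} {U T : Ty} {tx ty : Tm} :
      VarUnbox Γ x tx (.capt C (.arrow z U T)) →
      AdpTyp Γ y ty U →
      BITyp Γ (.app x y) (norm (.letin x' tx (.letin y' ty (.app x' y'))))
        (if ty.isVar then renameTy z y T else avoid y' (cvTy U) (renameTy z y' T))
  | tapp {Γ : Env} {x x' X : ℕ} {S S' : ShapeTy} {T : Ty} {C : Finset ℕ} {tx : Tm} :
      VarUnbox Γ x tx (.capt C (.tarrow X S T)) → SubShape Γ S' S →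
      BITyp Γ (.tapp x S') (.letin x' tx (.tapp x' S')) (tsubstTy X S' T)
  | box {Γ x C S} : WidenVar Γ x (.capt C S) → C ⊆ envDom Γ →
      BITyp Γ (.box x) (.box x) (.capt ∅ (.box (.capt C S)))
  | unbox {Γ x C C' S D} : WidenVar Γ x (.capt D (.box (.capt C S))) → C ⊆ envDom Γ →
      Subcapt Γ C C' →
      BITyp Γ (.unbox C' x) (.unbox C' x) (.capt C S)
  | letin {Γ x s s' t t' U T} : BITyp Γ s s' U → BITyp (Binding.val x U :: Γ) t t' T →
      BITyp Γ (.letin x s t) (.letin x s' t') (avoid x (cvTy U) T)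

/-! ## Type-level box inference (CC_adpt, Figures 7–8) -/

/-- Term kinds. -/
inductive Kind : Type where
  | var | val | trm
deriving DecidableEq

/-- The kind of a term. -/
def Tm.cat : Tm → Kind
  | .var _ => .var
  | .abs _ _ _ => .val
  | .tabs _ _ _ => .val
  | .box _ => .val
  | _ => .trm

/-- Capture sets possibly containing the hole `◊`. -/
structure HSet : Type where
  s : Finset ℕ
  hole : Bool
deriving DecidableEq

/-- `C[x] = (C \ {◊}) ∪ {x}`: filling the hole with a variable. -/
def HSet.fill (C : HSet) (x : ℕ) : Finset ℕ := insert x C.s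

/-- `{◊}`. -/
def HSet.holeOnly : HSet := ⟨∅, true⟩

def boxedKind : Kind → Kind
  | .var => .var
  | _ => .trm

def boxedSet (κ : Kind) (Ch : HSet) (C1 : Finset ℕ) : HSet :=
  match κ with
  | .var => HSet.holeOnly
  | .val => ⟨C1, true⟩
  | .trm => ⟨Ch.s ∪ C1, true⟩

/-- Type-level adaptation subtyping `Γ ⊢ T ↝ <: U ⇒ (κ, C)`. -/
inductive AdptSub : Env → Ty → Ty → Kind → HSet → Prop where
  | refl {Γ C C' S} : Subcapt Γ C C' →
      AdptSub Γ (.capt C S) (.capt C' S) .var HSet.holeOnly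
  | tvar {Γ X S C C' S' κ Ch} : Binding.tvar X S ∈ Γ →
      AdptSub Γ (.capt C S) (.capt C' S') κ Ch →
      AdptSub Γ (.capt C (.tvar X)) (.capt C' S') κ Ch
  | top {Γ C C' S} : Subcapt Γ C C' →
      AdptSub Γ (.capt C S) (.capt C' .top) .var HSet.holeOnly
  | boxed {Γ C1 S1 C2 S2 Cx Cy κ Ch} :
      AdptSub Γ (.capt C1 S1) (.capt C2 S2) κ Ch →
      AdptSub Γ (.capt Cx (.box (.capt C1 S1))) (.capt Cy (.box (.capt C2 S2)))
        (boxedKind κ) (boxedSet κ Ch C1)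
  | arrow {Γ : Env} {x x' : ℕ} {U1 U2 T1 T2 : Ty} {C C' : Finset ℕ} {κ1 κ2 : Kind}
      {C1 C2 : HSet} :
      AdptSub Γ U2 U1 κ1 C1 →
      AdptSub (Binding.val x' U1 :: Binding.val x U2 :: Γ)
        (if κ1 = Kind.var then T1 else renameTy x x' T1) T2 κ2 C2 →
      Subcapt Γ (((C1.s ∪ C2.s) \ {x, x'}) ∪ C) C' →
      AdptSub Γ (.capt C (.arrow x U1 T1)) (.capt C' (.arrow x U2 T2))
        (if κ1 = Kind.var ∧ κ2 = Kind.var then Kind.var else Kind.val)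
        ⟨(C1.s ∪ C2.s) \ {x, x'}, true⟩
  | tarrow {Γ : Env} {X : ℕ} {S1 S2 : ShapeTy} {T1 T2 : Ty} {C C' : Finset ℕ} {κ : Kind}
      {C2 : HSet} :
      SubShape Γ S2 S1 →
      AdptSub (Binding.tvar X S2 :: Γ) T1 T2 κ C2 →
      Subcapt Γ (C2.s ∪ C) C' →
      AdptSub Γ (.capt C (.tarrow X S1 T1)) (.capt C' (.tarrow X S2 T2))
        (if κ = Kind.var then Kind.var else Kind.val) ⟨C2.s, false⟩
  | box {Γ : Env} {C1 C2 D : Finset ℕ} {S1 S2 : ShapeTy} {κ : Kind} {C0 : HSet} :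
      AdptSub Γ (.capt C1 S1) (.capt C2 S2) κ C0 → C2 ⊆ envDom Γ →
      AdptSub Γ (.capt C1 S1) (.capt D (.box (.capt C2 S2))) Kind.trm
        (if κ = Kind.trm then C0 else ⟨∅, false⟩)
  | unbox {Γ : Env} {C1 C2 Cx : Finset ℕ} {S1 S2 : ShapeTy} {κ : Kind} {C0 : HSet} :
      AdptSub Γ (.capt C1 S1) (.capt C2 S2) κ C0 → C1 ⊆ envDom Γ →
      AdptSub Γ (.capt Cx (.box (.capt C1 S1))) (.capt C2 S2) Kind.trm ⟨C1 ∪ C0.s, true⟩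

/-- Type-level box adaptation `Γ ⊢ x ↝ : T ⇒ (κ, C)`. -/
inductive AdptVar : Env → ℕ → Ty → Kind → Finset ℕ → Prop where
  | adapt {Γ x U T κ Ch} : AlgTyp Γ (.var x) U → AdptSub Γ U T κ Ch → WfTy Γ T →
      AdptVar Γ x T κ (Ch.fill x)

/-- Type-level variable typing with unboxing `Γ ⊢ x ⇑↝ : T ⇒ C`. -/
inductive VarUnboxT : Env → ℕ → Ty → Finset ℕ → Prop where
  | ret {Γ x T} : WidenVar Γ x T → VarUnboxT Γ x T {x}
  | unbox {Γ x D C S} : WidenVar Γ x (.capt D (.box (.capt C S))) → C ⊆ envDom Γ →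
      VarUnboxT Γ x (.capt C S) (insert x C)

/-- Type-level box-inference typing `Γ ⊢→ t : T ⇒ C`. -/
inductive AdptTyp : Env → Tm → Ty → Finset ℕ → Prop where
  | var {Γ x C S} : Binding.val x (Ty.capt C S) ∈ Γ →
      AdptTyp Γ (.var x) (.capt {x} S) {x}
  | abs {Γ x U t T C} : AdptTyp (Binding.val x U :: Γ) t T C → WfTy Γ U →
      AdptTyp Γ (.abs x U t) (.capt (C \ {x}) (.arrow x U T)) (C \ {x})
  | tabs {Γ X S t T C} : AdptTyp (Binding.tvar X S :: Γ) t T C → WfShape Γ S →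
      AdptTyp Γ (.tabs X S t) (.capt C (.tarrow X S T)) C
  | app {Γ : Env} {x y z : ℕ} {C C1 C2 : Finset ℕ} {U T : Ty} {κ : Kind} :
      VarUnboxT Γ x (.capt C (.arrow z U T)) C1 →
      AdptVar Γ y U κ C2 →
      AdptTyp Γ (.app x y)
        (if κ = Kind.var then renameTy z y T else avoid z (cvTy U) T)
        (C1 ∪ C2)
  | tapp {Γ x X S S' T C} : VarUnboxT Γ x (.capt C (.tarrow X S T)) C →
      SubShape Γ S' S →
      AdptTyp Γ (.tapp x S') (tsubstTy X S' T) C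
  | box {Γ x C S} : WidenVar Γ x (.capt C S) → C ⊆ envDom Γ →
      AdptTyp Γ (.box x) (.capt ∅ (.box (.capt C S))) ∅
  | unbox {Γ x D C C' S} : WidenVar Γ x (.capt D (.box (.capt C S))) → C ⊆ envDom Γ →
      Subcapt Γ C C' →
      AdptTyp Γ (.unbox C' x) (.capt C S) (insert x C')
  | letin {Γ x s t U T C1 C2} : AdptTyp Γ s U C1 →
      AdptTyp (Binding.val x U :: Γ) t T C2 →
      AdptTyp Γ (.letin x s t) (avoid x (cvTy U) T)
        (if s.isValue = true ∧ x ∉ C2 then C2 else C1 ∪ (C2 \ {x}))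


/-! ### Auxiliary material for the transitivity proof -/

mutual
def sizeS : ShapeTy → ℕ
  | .tvar _ => 1
  | .top => 1
  | .arrow _ U T => sizeT U + sizeT T + 1
  | .tarrow _ S T => sizeS S + sizeT T + 1
  | .box T => sizeT T + 1
def sizeT : Ty → ℕ
  | .capt _ S => sizeS S + 1
end

theorem sizeS_pos (S : ShapeTy) : 1 ≤ sizeS S := by
  cases S <;> simp [sizeS]

/-- Joint induction principle for the mutual inductives `SubShape`/`SubTy`. -/
theorem sub_induct
    {motive1 : Env → ShapeTy → ShapeTy → Prop}
    {motive2 : Env → Ty → Ty → Prop}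
    (refl : ∀ Γ X, motive1 Γ (.tvar X) (.tvar X))
    (tvar : ∀ Γ X S S', Binding.tvar X S ∈ Γ → SubShape Γ S S' → motive1 Γ S S' →
      motive1 Γ (.tvar X) S')
    (top : ∀ Γ S, motive1 Γ S .top)
    (arrow : ∀ Γ x U1 U2 T1 T2, SubTy Γ U2 U1 → SubTy (Binding.val x U2 :: Γ) T1 T2 →
      motive2 Γ U2 U1 → motive2 (Binding.val x U2 :: Γ) T1 T2 →
      motive1 Γ (.arrow x U1 T1) (.arrow x U2 T2))
    (tarrow : ∀ Γ X S1 S2 T1 T2, SubShape Γ S2 S1 → SubTy (Binding.tvar X S2 :: Γ) T1 T2 →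
      motive1 Γ S2 S1 → motive2 (Binding.tvar X S2 :: Γ) T1 T2 →
      motive1 Γ (.tarrow X S1 T1) (.tarrow X S2 T2))
    (boxed : ∀ Γ T1 T2, SubTy Γ T1 T2 → motive2 Γ T1 T2 → motive1 Γ (.box T1) (.box T2))
    (capt : ∀ Γ C1 C2 S1 S2, Subcapt Γ C1 C2 → SubShape Γ S1 S2 → motive1 Γ S1 S2 →
      motive2 Γ (.capt C1 S1) (.capt C2 S2)) :
    (∀ Γ A B, SubShape Γ A B → motive1 Γ A B) ∧ (∀ Γ A B, SubTy Γ A B → motive2 Γ A B) :=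
  ⟨fun _ _ _ h =>
    SubShape.rec (motive_1 := fun Γ A B _ => motive1 Γ A B)
      (motive_2 := fun Γ A B _ => motive2 Γ A B)
      (fun {Γ X} => refl Γ X)
      (fun {Γ X S S'} a a1 ih => tvar Γ X S S' a a1 ih)
      (fun {Γ S} => top Γ S)
      (fun {Γ x U1 U2 T1 T2} a a1 ih ih1 => arrow Γ x U1 U2 T1 T2 a a1 ih ih1)
      (fun {Γ X S1 S2 T1 T2} a a1 ih ih1 => tarrow Γ X S1 S2 T1 T2 a a1 ih ih1)
      (fun {Γ T1 T2} a ih => boxed Γ T1 T2 a ih)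
      (fun {Γ C1 C2 S1 S2} a a1 ih => capt Γ C1 C2 S1 S2 a a1 ih) h,
   fun _ _ _ h =>
    SubTy.rec (motive_1 := fun Γ A B _ => motive1 Γ A B)
      (motive_2 := fun Γ A B _ => motive2 Γ A B)
      (fun {Γ X} => refl Γ X)
      (fun {Γ X S S'} a a1 ih => tvar Γ X S S' a a1 ih)
      (fun {Γ S} => top Γ S)
      (fun {Γ x U1 U2 T1 T2} a a1 ih ih1 => arrow Γ x U1 U2 T1 T2 a a1 ih ih1)
      (fun {Γ X S1 S2 T1 T2} a a1 ih ih1 => tarrow Γ X S1 S2 T1 T2 a a1 ih ih1)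
      (fun {Γ T1 T2} a ih => boxed Γ T1 T2 a ih)
      (fun {Γ C1 C2 S1 S2} a a1 ih => capt Γ C1 C2 S1 S2 a a1 ih) h⟩

theorem subcapt_refl (Γ : Env) (C : Finset ℕ) : Subcapt Γ C C :=
  .set fun _ hx => .elem hx

theorem subcapt_elem_trans {Γ : Env} {C2 C3 : Finset ℕ} {x : ℕ}
    (h : Subcapt Γ C2 C3) (hx : x ∈ C2) : Subcapt Γ {x} C3 := by
  cases h with
  | elem h => rw [Finset.mem_singleton] at hx; subst hx; exact .elem h
  | set h => exact h x hx
  | var hb h => rw [Finset.mem_singleton] at hx; subst hx; exact .var hb h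

theorem subcapt_trans {Γ : Env} {C1 C2 C3 : Finset ℕ}
    (h1 : Subcapt Γ C1 C2) : Subcapt Γ C2 C3 → Subcapt Γ C1 C3 := by
  induction h1 generalizing C3 with
  | elem hx => exact fun h2 => subcapt_elem_trans h2 hx
  | set _ ih => exact fun h2 => .set fun x hx => ih x hx h2
  | var hb _ ih => exact fun h2 => .var hb (ih h2)

theorem subcapt_mono {Γ Γ' : Env} {C D : Finset ℕ}
    (hs : ∀ b ∈ Γ, b ∈ Γ') (h : Subcapt Γ C D) : Subcapt Γ' C D := by
  induction h with
  | elem hx => exact .elem hx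
  | set _ ih => exact .set fun x hx => ih x hx
  | var hb _ ih => exact .var (hs _ hb) ih

theorem cons_mono {b : Binding} {Γ Γ' : Env} (hs : ∀ c ∈ Γ, c ∈ Γ') :
    ∀ c ∈ (b :: Γ), c ∈ (b :: Γ') := by
  intro c hc
  rcases List.mem_cons.mp hc with h | h
  · exact h ▸ List.mem_cons_self
  · exact List.mem_cons_of_mem _ (hs c h)

theorem sub_mono :
    (∀ Γ A B, SubShape Γ A B → ∀ Γ', (∀ b ∈ Γ, b ∈ Γ') → SubShape Γ' A B) ∧
    (∀ Γ A B, SubTy Γ A B → ∀ Γ', (∀ b ∈ Γ, b ∈ Γ') → SubTy Γ' A B) := by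
  apply sub_induct
  · intro Γ X Γ' _; exact .refl
  · intro Γ X S S' hb _ ih Γ' hs; exact .tvar (hs _ hb) (ih Γ' hs)
  · intro Γ S Γ' _; exact .top
  · intro Γ x U1 U2 T1 T2 _ _ ihU ihT Γ' hs
    exact .arrow (ihU Γ' hs) (ihT _ (cons_mono hs))
  · intro Γ X S1 S2 T1 T2 _ _ ihS ihT Γ' hs
    exact .tarrow (ihS Γ' hs) (ihT _ (cons_mono hs))
  · intro Γ T1 T2 _ ih Γ' hs; exact .boxed (ih Γ' hs)
  · intro Γ C1 C2 S1 S2 hc _ ih Γ' hs; exact .capt (subcapt_mono hs hc) (ih Γ' hs)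

theorem subshape_mono {Γ Γ' : Env} {A B : ShapeTy} (hs : ∀ b ∈ Γ, b ∈ Γ')
    (h : SubShape Γ A B) : SubShape Γ' A B := sub_mono.1 Γ A B h Γ' hs

theorem subty_mono {Γ Γ' : Env} {A B : Ty} (hs : ∀ b ∈ Γ, b ∈ Γ')
    (h : SubTy Γ A B) : SubTy Γ' A B := sub_mono.2 Γ A B h Γ' hs

/-- Environment relation controlling term-variable bindings (for narrowing). -/
def ValRel (Γ1 Γ2 : Env) : Prop :=
  ∀ x C S, Binding.val x (.capt C S) ∈ Γ1 →
    ∃ C' S', Binding.val x (.capt C' S') ∈ Γ2 ∧ Subcapt Γ2 C' C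

/-- Environment relation controlling type-variable bindings (for narrowing). -/
def TvarRel (n : ℕ) (Γ1 Γ2 : Env) : Prop :=
  ∀ X S, Binding.tvar X S ∈ Γ1 →
    Binding.tvar X S ∈ Γ2 ∨
      ∃ S', Binding.tvar X S' ∈ Γ2 ∧ SubShape Γ2 S' S ∧ sizeS S ≤ n

theorem subcapt_narrow {Γ1 Γ2 : Env} {C D : Finset ℕ}
    (hv : ValRel Γ1 Γ2) (h : Subcapt Γ1 C D) : Subcapt Γ2 C D := by
  induction h with
  | elem hx => exact .elem hx
  | set _ ih => exact .set fun x hx => ih x hx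
  | var hb _ ih =>
    obtain ⟨C', S', hb', hc'⟩ := hv _ _ _ hb
    exact .var hb' (subcapt_trans hc' ih)

theorem valrel_cons_val {Γ1 Γ2 : Env} {x : ℕ} {U : Ty} (hv : ValRel Γ1 Γ2) :
    ValRel (Binding.val x U :: Γ1) (Binding.val x U :: Γ2) := by
  intro y C S hmem
  rcases List.mem_cons.mp hmem with h | h
  · exact ⟨C, S, h ▸ List.mem_cons_self, subcapt_refl _ _⟩
  · obtain ⟨C', S', hb', hc'⟩ := hv _ _ _ h
    exact ⟨C', S', List.mem_cons_of_mem _ hb',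
      subcapt_mono (fun c hc => List.mem_cons_of_mem _ hc) hc'⟩

theorem valrel_cons_tvar {Γ1 Γ2 : Env} {X : ℕ} {S : ShapeTy} (hv : ValRel Γ1 Γ2) :
    ValRel (Binding.tvar X S :: Γ1) (Binding.tvar X S :: Γ2) := by
  intro y C S0 hmem
  rcases List.mem_cons.mp hmem with h | h
  · exact absurd h (by simp)
  · obtain ⟨C', S', hb', hc'⟩ := hv _ _ _ h
    exact ⟨C', S', List.mem_cons_of_mem _ hb',
      subcapt_mono (fun c hc => List.mem_cons_of_mem _ hc) hc'⟩

theorem tvarrel_cons {n : ℕ} {Γ1 Γ2 : Env} {b : Binding} (ht : TvarRel n Γ1 Γ2) :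
    TvarRel n (b :: Γ1) (b :: Γ2) := by
  intro Y S0 hmem
  rcases List.mem_cons.mp hmem with h | h
  · exact Or.inl (h ▸ List.mem_cons_self)
  · rcases ht _ _ h with h' | ⟨S', hb', hsub, hsz⟩
    · exact Or.inl (List.mem_cons_of_mem _ h')
    · exact Or.inr ⟨S', List.mem_cons_of_mem _ hb',
        subshape_mono (fun c hc => List.mem_cons_of_mem _ hc) hsub, hsz⟩

/-- Narrowing, parameterized by a transitivity oracle at level `n`. -/
theorem sub_narrow (n : ℕ)
    (tr : ∀ Δ S1 S2 S3, sizeS S2 ≤ n → SubShape Δ S1 S2 → SubShape Δ S2 S3 →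
      SubShape Δ S1 S3) :
    (∀ Γ A B, SubShape Γ A B → ∀ Γ2, ValRel Γ Γ2 → TvarRel n Γ Γ2 → SubShape Γ2 A B) ∧
    (∀ Γ A B, SubTy Γ A B → ∀ Γ2, ValRel Γ Γ2 → TvarRel n Γ Γ2 → SubTy Γ2 A B) := by
  apply sub_induct
  · intro Γ X Γ2 _ _; exact .refl
  · intro Γ X S S' hb _ ih Γ2 hv ht
    rcases ht _ _ hb with h' | ⟨S'', hb'', hsub, hsz⟩
    · exact .tvar h' (ih Γ2 hv ht)
    · exact .tvar hb'' (tr Γ2 S'' S S' hsz hsub (ih Γ2 hv ht))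
  · intro Γ S Γ2 _ _; exact .top
  · intro Γ x U1 U2 T1 T2 _ _ ihU ihT Γ2 hv ht
    exact .arrow (ihU Γ2 hv ht) (ihT _ (valrel_cons_val hv) (tvarrel_cons ht))
  · intro Γ X S1 S2 T1 T2 _ _ ihS ihT Γ2 hv ht
    exact .tarrow (ihS Γ2 hv ht) (ihT _ (valrel_cons_tvar hv) (tvarrel_cons ht))
  · intro Γ T1 T2 _ ih Γ2 hv ht; exact .boxed (ih Γ2 hv ht)
  · intro Γ C1 C2 S1 S2 hc _ ih Γ2 hv ht
    exact .capt (subcapt_narrow hv hc) (ih Γ2 hv ht)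

theorem trans_all (n : ℕ) :
    (∀ Γ S1 S2 S3, sizeS S2 ≤ n → SubShape Γ S1 S2 → SubShape Γ S2 S3 → SubShape Γ S1 S3) ∧
    (∀ Γ T1 T2 T3, sizeT T2 ≤ n → SubTy Γ T1 T2 → SubTy Γ T2 T3 → SubTy Γ T1 T3) := by
  induction n using Nat.strong_induction_on with
  | _ n IH =>
  have main :
      (∀ Γ A B, SubShape Γ A B →
        ∀ S3, sizeS B ≤ n → SubShape Γ B S3 → SubShape Γ A S3) ∧
      (∀ Γ A B, SubTy Γ A B →
        ∀ T3, sizeT B ≤ n → SubTy Γ B T3 → SubTy Γ A T3) := by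
    apply sub_induct
    · intro Γ X S3 _ h2; exact h2
    · intro Γ X S S' hb _ ih S3 hsz h2; exact .tvar hb (ih S3 hsz h2)
    · intro Γ S S3 _ h2; cases h2; exact .top
    · intro Γ x U1 U2 T1 T2 hU hT _ _ S3 hsz h2
      cases h2 with
      | top => exact .top
      | arrow hU' hT' =>
        rename_i U3 T3
        have hu2 : sizeT U2 < n := by
          have := hsz; simp [sizeS] at this; omega
        have ht2 : sizeT T2 < n := by
          have := hsz; simp [sizeS] at this; omega
        -- U3 <: U1
        have hU13 : SubTy Γ U3 U1 := (IH _ hu2).2 Γ U3 U2 U1 le_rfl hU' hU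
        -- narrow hT from x:U2 to x:U3
        obtain ⟨C3, C2', S3', S2', hc32, hs32⟩ :
            ∃ C3 C2' S3' S2', Subcapt Γ C3 C2' ∧
              U3 = Ty.capt C3 S3' ∧ U2 = Ty.capt C2' S2' := by
          cases hU' with
          | capt hc hs => exact ⟨_, _, _, _, hc, rfl, rfl⟩
        obtain ⟨hu3eq, hu2eq⟩ := hs32
        have hvr : ValRel (Binding.val x U2 :: Γ) (Binding.val x U3 :: Γ) := by
          intro y C S hmem
          rcases List.mem_cons.mp hmem with h | h
          · cases h
            subst hu3eq
            injection hu2eq with h1 h2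
            subst h1; subst h2
            refine ⟨C3, S3', List.mem_cons_self, ?_⟩
            exact subcapt_mono (fun c hc => List.mem_cons_of_mem _ hc) hc32
          · exact ⟨C, S, List.mem_cons_of_mem _ h, subcapt_refl _ _⟩
        have htr : TvarRel 0 (Binding.val x U2 :: Γ) (Binding.val x U3 :: Γ) := by
          intro Y S0 hmem
          rcases List.mem_cons.mp hmem with h | h
          · exact absurd h (by simp)
          · exact Or.inl (List.mem_cons_of_mem _ h)
        have oracle0 : ∀ (Δ : Env) S1 S2 S3, sizeS S2 ≤ 0 → SubShape Δ S1 S2 →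
            SubShape Δ S2 S3 → SubShape Δ S1 S3 := by
          intro Δ S1 S2 S3 hsz _ _
          exact absurd hsz (by have := sizeS_pos S2; omega)
        have hTn : SubTy (Binding.val x U3 :: Γ) T1 T2 :=
          (sub_narrow 0 oracle0).2 _ _ _ hT _ hvr htr
        exact .arrow hU13 ((IH _ ht2).2 _ T1 T2 T3 le_rfl hTn hT')
    · intro Γ X S1 S2 T1 T2 hS hT _ _ S3 hsz h2
      cases h2 with
      | top => exact .top
      | tarrow hS' hT' =>
        rename_i S3' T3
        have hs2 : sizeS S2 < n := by
          have := hsz; simp [sizeS] at this; omega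
        have ht2 : sizeT T2 < n := by
          have := hsz; simp [sizeS] at this; omega
        have hS13 : SubShape Γ S3' S1 := (IH _ hs2).1 Γ S3' S2 S1 le_rfl hS' hS
        have hvr : ValRel (Binding.tvar X S2 :: Γ) (Binding.tvar X S3' :: Γ) := by
          intro y C S hmem
          rcases List.mem_cons.mp hmem with h | h
          · exact absurd h (by simp)
          · exact ⟨C, S, List.mem_cons_of_mem _ h, subcapt_refl _ _⟩
        have htr : TvarRel (sizeS S2) (Binding.tvar X S2 :: Γ) (Binding.tvar X S3' :: Γ) := by
          intro Y S0 hmem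
          rcases List.mem_cons.mp hmem with h | h
          · cases h
            refine Or.inr ⟨S3', List.mem_cons_self, ?_, le_rfl⟩
            exact subshape_mono (fun c hc => List.mem_cons_of_mem _ hc) hS'
          · exact Or.inl (List.mem_cons_of_mem _ h)
        have hTn : SubTy (Binding.tvar X S3' :: Γ) T1 T2 :=
          (sub_narrow (sizeS S2) (fun Δ A B C hsz' => (IH _ hs2).1 Δ A B C hsz')).2
            _ _ _ hT _ hvr htr
        exact .tarrow hS13 ((IH _ ht2).2 _ T1 T2 T3 le_rfl hTn hT')
    · intro Γ T1 T2 _ ih S3 hsz h2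
      cases h2 with
      | top => exact .top
      | boxed hT' =>
        have ht2 : sizeT T2 < n := by
          have := hsz; simp [sizeS] at this; omega
        exact .boxed ((IH _ ht2).2 _ T1 T2 _ le_rfl ‹_› hT')
    · intro Γ C1 C2 S1 S2 hc _ ih T3 hsz h2
      cases h2 with
      | capt hc' hs' =>
        have : sizeS S2 ≤ n := by
          have := hsz; simp [sizeT] at this; omega
        exact .capt (subcapt_trans hc hc') (ih _ this hs')
  exact ⟨fun Γ S1 S2 S3 hsz h1 h2 => main.1 Γ S1 S2 h1 S3 hsz h2,
    fun Γ T1 T2 T3 hsz h1 h2 => main.2 Γ T1 T2 h1 T3 hsz h2⟩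

/-- Transitivity of algorithmic subtyping. -/
theorem algorithmic_subtyping_transitivity :
    ∀ (Γ : Env) (T1 T2 T3 : Ty), SubTy Γ T1 T2 → SubTy Γ T2 T3 → SubTy Γ T1 T3 := by
  intro Γ T1 T2 T3 h1 h2
  exact (trans_all (sizeT T2)).2 Γ T1 T2 T3 le_rfl h1 h2
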